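/- For any open Ω ⊆ ℂⁿ, any compact K ⊆ Ω, and any point p in the boundary ∂Ω, the closure in ℂⁿ of the hull K̂ (taken with respect to the family of all functions f_{λ,q}(z) = (Σᵢ λᵢ·conj(zᵢ-qᵢ))/‖z-q‖² with q ∈ ℂⁿ \ Ω, |λᵢ|=1) does not contain p. -/

import Mathlib

open scoped BigOperators ComplexConjugate

/-- `f_{λ,q}(z) = (∑ i, λ i * conj (z i - q i)) / ‖z - q‖²` (junk value at `z = q`). -/
noncomputable def fLamP {n : ℕ} (lam : Fin n → ℂ) (q z : EuclideanSpace ℂ (Fin n)) : ℂ :=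
  (∑ i, lam i * conj (z i - q i)) / ((‖z - q‖ ^ 2 : ℝ) : ℂ)

/-- The hull of `K` in `Ω` with respect to a family `O` of functions. -/
def hull {n : ℕ} (O : Set (EuclideanSpace ℂ (Fin n) → ℂ))
    (Ω K : Set (EuclideanSpace ℂ (Fin n))) : Set (EuclideanSpace ℂ (Fin n)) :=
  {z ∈ Ω | ∀ f ∈ O, ‖f z‖ ≤ ⨆ x ∈ K, ‖f x‖}

/-- ℓ² norm is at most the ℓ¹ norm. -/
lemma euclid_norm_le_sum_norm {n : ℕ} (x : EuclideanSpace ℂ (Fin n)) :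
    ‖x‖ ≤ ∑ i, ‖x i‖ := by
  rw [EuclideanSpace.norm_eq]
  calc Real.sqrt (∑ i, ‖x i‖ ^ 2) ≤ Real.sqrt ((∑ i, ‖x i‖) ^ 2) :=
        Real.sqrt_le_sqrt (Finset.sum_sq_le_sq_sum_of_nonneg fun _ _ => norm_nonneg _)
    _ = ∑ i, ‖x i‖ := Real.sqrt_sq (Finset.sum_nonneg fun _ _ => norm_nonneg _)

/-- ℓ¹ norm is at most `√n` times the ℓ² norm. -/
lemma sum_norm_le_sqrt_mul {n : ℕ} (x : EuclideanSpace ℂ (Fin n)) :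
    ∑ i, ‖x i‖ ≤ Real.sqrt n * ‖x‖ := by
  have hx2 : ‖x‖ ^ 2 = ∑ i, ‖x i‖ ^ 2 := by
    rw [EuclideanSpace.norm_eq, Real.sq_sqrt (Finset.sum_nonneg fun i _ => sq_nonneg ‖x i‖)]
  have h1 : (∑ i, ‖x i‖) ^ 2 ≤ (n : ℝ) * ‖x‖ ^ 2 := by
    rw [hx2]
    simpa using sq_sum_le_card_mul_sum_sq (s := Finset.univ) (f := fun i => ‖x i‖)
  calc ∑ i, ‖x i‖ = Real.sqrt ((∑ i, ‖x i‖) ^ 2) :=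
        (Real.sqrt_sq (Finset.sum_nonneg fun _ _ => norm_nonneg _)).symm
    _ ≤ Real.sqrt ((n : ℝ) * ‖x‖ ^ 2) := Real.sqrt_le_sqrt h1
    _ = Real.sqrt n * ‖x‖ := by
        rw [Real.sqrt_mul (Nat.cast_nonneg n), Real.sqrt_sq (norm_nonneg x)]

lemma norm_fLamP_eq {n : ℕ} (lam : Fin n → ℂ) (q z : EuclideanSpace ℂ (Fin n)) :
    ‖fLamP lam q z‖ = ‖∑ i, lam i * conj (z i - q i)‖ / ‖z - q‖ ^ 2 := by
  rw [fLamP, norm_div, Complex.norm_real, Real.norm_of_nonneg (by positivity)]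

/-- Upper bound: `‖f_{λ,q}(x)‖ ≤ √n / ‖x - q‖`. -/
lemma norm_fLamP_le {n : ℕ} (lam : Fin n → ℂ) (hlam : ∀ i, ‖lam i‖ = 1)
    (q x : EuclideanSpace ℂ (Fin n)) (hx : x ≠ q) :
    ‖fLamP lam q x‖ ≤ Real.sqrt n / ‖x - q‖ := by
  have hne : ‖x - q‖ ≠ 0 := by simpa [sub_eq_zero] using hx
  have hpos : (0 : ℝ) < ‖x - q‖ := lt_of_le_of_ne (norm_nonneg _) (Ne.symm hne)
  rw [norm_fLamP_eq]
  have hsum : ‖∑ i, lam i * conj (x i - q i)‖ ≤ Real.sqrt n * ‖x - q‖ := by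
    calc ‖∑ i, lam i * conj (x i - q i)‖ ≤ ∑ i, ‖lam i * conj (x i - q i)‖ :=
          norm_sum_le _ _
      _ = ∑ i, ‖(x - q : EuclideanSpace ℂ (Fin n)) i‖ := by
          refine Finset.sum_congr rfl fun i _ => ?_
          rw [norm_mul, hlam i, one_mul, RCLike.norm_conj]
          simp [PiLp.sub_apply]
      _ ≤ Real.sqrt n * ‖x - q‖ := sum_norm_le_sqrt_mul _
  rw [div_le_div_iff₀ (by positivity) hpos]
  calc ‖∑ i, lam i * conj (x i - q i)‖ * ‖x - q‖ ≤ (Real.sqrt n * ‖x - q‖) * ‖x - q‖ := by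
        gcongr
    _ = Real.sqrt n * ‖x - q‖ ^ 2 := by ring

/-- Lower bound: for each `z ≠ q` there are unimodular `λ` with `1/‖z-q‖ ≤ ‖f_{λ,q}(z)‖`. -/
lemma exists_lam {n : ℕ} (q z : EuclideanSpace ℂ (Fin n)) (hz : z ≠ q) :
    ∃ lam : Fin n → ℂ, (∀ i, ‖lam i‖ = 1) ∧ 1 / ‖z - q‖ ≤ ‖fLamP lam q z‖ := by
  have hne : ‖z - q‖ ≠ 0 := by simpa [sub_eq_zero] using hz
  have hpos : (0 : ℝ) < ‖z - q‖ := lt_of_le_of_ne (norm_nonneg _) (Ne.symm hne)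
  set lam : Fin n → ℂ := fun i =>
    if h : z i - q i = 0 then 1 else (z i - q i) / (‖z i - q i‖ : ℂ) with hlamdef
  have hlam : ∀ i, ‖lam i‖ = 1 := by
    intro i
    by_cases h : z i - q i = 0
    · simp [hlamdef, h]
    · have hr0 : ‖z i - q i‖ ≠ 0 := norm_ne_zero_iff.mpr h
      rw [hlamdef]
      simp only [h, dif_neg, not_false_iff]
      rw [norm_div, Complex.norm_real, Real.norm_of_nonneg (norm_nonneg _), div_self hr0]
  have hterm : ∀ i, lam i * conj (z i - q i) = ((‖z i - q i‖ : ℝ) : ℂ) := by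
    intro i
    by_cases h : z i - q i = 0
    · simp [hlamdef, h]
    · have hr0 : ‖z i - q i‖ ≠ 0 := norm_ne_zero_iff.mpr h
      have hn : ((‖z i - q i‖ : ℝ) : ℂ) ≠ 0 := by exact_mod_cast hr0
      rw [hlamdef]
      simp only [h, dif_neg, not_false_iff]
      rw [div_mul_eq_mul_div, Complex.mul_conj]
      rw [Complex.normSq_eq_norm_sq]
      push_cast
      rw [pow_two, mul_div_assoc, div_self hn, mul_one]
  refine ⟨lam, hlam, ?_⟩
  have hsum : ∑ i, lam i * conj (z i - q i) = ((∑ i, ‖z i - q i‖ : ℝ) : ℂ) := by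
    push_cast
    exact Finset.sum_congr rfl fun i _ => hterm i
  rw [norm_fLamP_eq, hsum, Complex.norm_real,
    Real.norm_of_nonneg (Finset.sum_nonneg fun _ _ => norm_nonneg _)]
  have hge : ‖z - q‖ ≤ ∑ i, ‖z i - q i‖ := by
    have := euclid_norm_le_sum_norm (z - q)
    simpa [PiLp.sub_apply] using this
  rw [div_le_div_iff₀ hpos (by positivity)]
  calc 1 * ‖z - q‖ ^ 2 = ‖z - q‖ * ‖z - q‖ := by ring
    _ ≤ (∑ i, ‖z i - q i‖) * ‖z - q‖ := by gcongr

/-- For any open `Ω ⊆ ℂⁿ`, compact `K ⊆ Ω` and boundary point `p` of `Ω`, the closure of the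
hull of `K` with respect to the family of all `f_{λ,q}` with `q ∉ Ω` and unimodular `λ` does
not contain `p`. -/
theorem closure_hull_avoids_boundary {n : ℕ}
    (Ω : Set (EuclideanSpace ℂ (Fin n))) (hΩ : IsOpen Ω)
    (K : Set (EuclideanSpace ℂ (Fin n))) (hK : IsCompact K) (hKΩ : K ⊆ Ω)
    (p : EuclideanSpace ℂ (Fin n)) (hp : p ∈ frontier Ω) :
    p ∉ closure (hull
      {f | ∃ q ∉ Ω, ∃ lam : Fin n → ℂ, (∀ i, ‖lam i‖ = 1) ∧ f = fLamP lam q} Ω K) := by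
  set O : Set (EuclideanSpace ℂ (Fin n) → ℂ) :=
    {f | ∃ q ∉ Ω, ∃ lam : Fin n → ℂ, (∀ i, ‖lam i‖ = 1) ∧ f = fLamP lam q}
  have hpΩ : p ∉ Ω := by
    rw [hΩ.frontier_eq] at hp
    exact hp.2
  -- z in hull implies z ≠ p
  have hzp : ∀ z ∈ hull O Ω K, z ≠ p := by
    rintro z hz rfl
    exact hpΩ hz.1
  -- Case K empty
  by_cases hKe : K = ∅
  · have : hull O Ω K = ∅ := by
      ext z
      simp only [Set.mem_empty_iff_false, iff_false]
      intro hz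
      obtain ⟨lam, hlam, hge⟩ := exists_lam p z (hzp z hz)
      have hfmem : fLamP lam p ∈ O := ⟨p, hpΩ, lam, hlam, rfl⟩
      have := hz.2 _ hfmem
      rw [hKe] at this
      have this : ‖fLamP lam p z‖ ≤ 0 := by simpa using this
      have hppos : (0:ℝ) < 1 / ‖z - p‖ := by
        have hne : ‖z - p‖ ≠ 0 := by simpa [sub_eq_zero] using hzp z hz
        positivity
      linarith [le_trans hge this]
    rw [this]
    simp
  -- Main case : K nonempty
  have hKne : K.Nonempty := Set.nonempty_iff_ne_empty.mpr hKe
  set r := Metric.infDist p K with hr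
  have hrpos : 0 < r := by
    rw [hr]
    exact (hK.isClosed.notMem_iff_infDist_pos hKne).mp (fun h => hpΩ (hKΩ h))
  have hn : 0 < n := by
    rcases Nat.eq_zero_or_pos n with h0 | h
    · exfalso
      obtain ⟨x, hx⟩ := hKne
      subst h0
      haveI : Subsingleton (EuclideanSpace ℂ (Fin 0)) :=
        ⟨fun a b => PiLp.ext fun i => Fin.elim0 i⟩
      have hxp : x = p := Subsingleton.elim x p
      exact hpΩ (hKΩ (hxp ▸ hx))
    · exact h
  have hsq : (0:ℝ) < Real.sqrt n := Real.sqrt_pos.mpr (by exact_mod_cast hn)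
  -- Every point of the hull is at distance ≥ r / √n from p
  have key : ∀ z ∈ hull O Ω K, r / Real.sqrt n ≤ dist z p := by
    intro z hz
    have hznep : z ≠ p := hzp z hz
    obtain ⟨lam, hlam, hge⟩ := exists_lam p z hznep
    have hfmem : fLamP lam p ∈ O := ⟨p, hpΩ, lam, hlam, rfl⟩
    have hbound := hz.2 _ hfmem
    -- bound the sup over K
    have hsup : (⨆ x ∈ K, ‖fLamP lam p x‖) ≤ Real.sqrt n / r := by
      refine Real.iSup_le (fun x => Real.iSup_le (fun hx => ?_) (by positivity))
        (by positivity)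
      have hxp : x ≠ p := fun h => hpΩ (hKΩ (h ▸ hx))
      calc ‖fLamP lam p x‖ ≤ Real.sqrt n / ‖x - p‖ := norm_fLamP_le lam hlam p x hxp
        _ ≤ Real.sqrt n / r := by
            apply div_le_div_of_nonneg_left (le_of_lt hsq) hrpos
            rw [← dist_eq_norm]
            rw [dist_comm]
            exact Metric.infDist_le_dist_of_mem hx
    have h1 : 1 / ‖z - p‖ ≤ Real.sqrt n / r := le_trans hge (le_trans hbound hsup)
    have hnz : (0:ℝ) < ‖z - p‖ := by
      have : ‖z - p‖ ≠ 0 := by simpa [sub_eq_zero] using hznep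
      exact lt_of_le_of_ne (norm_nonneg _) (Ne.symm this)
    rw [div_le_div_iff₀ hnz hrpos] at h1
    rw [dist_eq_norm]
    rw [div_le_iff₀ hsq]
    nlinarith
  -- conclude
  intro hmem
  have : r / Real.sqrt n ≤ dist p p := by
    have hclosed : IsClosed {z | r / Real.sqrt n ≤ dist z p} :=
      isClosed_le continuous_const (continuous_id.dist continuous_const)
    have hsub : hull O Ω K ⊆ {z | r / Real.sqrt n ≤ dist z p} := key
    exact (closure_minimal hsub hclosed) hmem
  rw [dist_self] at this
  have : (0:ℝ) < r / Real.sqrt n := by positivity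
  linarith
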